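/- arXiv:2602.08329 — 5 statements merged into one kernel-verified Lean document; each statement's English description precedes it below -/
import Mathlib

section
/- For every L ≥ 1 and all vectors a, a' ∈ ℝ^L, the softmax map is 2-Lipschitz from the ℓ∞ norm on logits to the ℓ1 norm on probabilities: Σ_{i=1}^L |softmax(a)_i − softmax(a')_i| ≤ 2 · max_{1≤i≤L} |a_i − a'_i|. -/
/-- The softmax of a logit vector `a : Fin L → ℝ`. -/
noncomputable def softmax {L : ℕ} (a : Fin L → ℝ) (i : Fin L) : ℝ :=
  Real.exp (a i) / ∑ j, Real.exp (a j)

lemma aux_exp (t : ℝ) (ht : 0 ≤ t) : 2 * (Real.exp t - 1) ≤ t * (Real.exp t + 1) := by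
  have hg : ∀ s : ℝ, HasDerivAt (fun s : ℝ => s * Real.exp s + s - 2 * Real.exp s + 2)
      (s * Real.exp s - Real.exp s + 1) s := by
    intro s
    have h1 : HasDerivAt (fun s : ℝ => s * Real.exp s) (1 * Real.exp s + s * Real.exp s) s :=
      (hasDerivAt_id s).mul (Real.hasDerivAt_exp s)
    have h2 := ((h1.add (hasDerivAt_id s)).sub ((Real.hasDerivAt_exp s).const_mul 2)).add_const 2
    exact h2.congr_deriv (by ring)
  have hmono : MonotoneOn (fun s : ℝ => s * Real.exp s + s - 2 * Real.exp s + 2) (Set.Ici 0) := by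
    apply monotoneOn_of_deriv_nonneg (convex_Ici 0)
    · exact fun s _ => ((hg s).continuousAt).continuousWithinAt
    · intro s _
      exact ((hg s).differentiableAt).differentiableWithinAt
    · intro s hs
      rw [(hg s).deriv]
      have h1 : 1 - s ≤ Real.exp (-s) := by linarith [Real.add_one_le_exp (-s)]
      have h2 : Real.exp s * Real.exp (-s) = 1 := by rw [← Real.exp_add]; simp
      nlinarith [Real.exp_pos s, mul_le_mul_of_nonneg_left h1 (Real.exp_pos s).le]
  have := hmono (Set.self_mem_Ici) (Set.mem_Ici.mpr ht) ht
  simp at this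
  nlinarith [this]

lemma abs_exp_sub_exp_le (x y : ℝ) :
    |Real.exp x - Real.exp y| ≤ |x - y| * (Real.exp x + Real.exp y) / 2 := by
  wlog h : y ≤ x with H
  · have := H y x (le_of_not_ge h)
    rw [abs_sub_comm y x, abs_sub_comm (Real.exp y), add_comm (Real.exp y)] at this
    exact this
  · have ht : 0 ≤ x - y := by linarith
    have key := aux_exp (x - y) ht
    have hx : Real.exp x = Real.exp (x - y) * Real.exp y := by
      rw [← Real.exp_add]; ring_nf
    have hexy : Real.exp y ≤ Real.exp x := Real.exp_le_exp.mpr h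
    rw [abs_of_nonneg (by linarith : (0:ℝ) ≤ Real.exp x - Real.exp y),
      abs_of_nonneg ht]
    nlinarith [Real.exp_pos y, mul_le_mul_of_nonneg_left key (Real.exp_pos y).le]

/-- softmax is 2-Lipschitz from the ℓ∞ norm on logits to the ℓ1 norm
on probabilities. -/
theorem softmax_lipschitz (L : ℕ) (hL : 1 ≤ L) (a a' : Fin L → ℝ) :
    ∑ i, |softmax a i - softmax a' i| ≤
      2 * (Finset.univ.sup' (Finset.univ_nonempty_iff.mpr ⟨⟨0, hL⟩⟩)
        fun i => |a i - a' i|) := by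
  set ε := Finset.univ.sup' (Finset.univ_nonempty_iff.mpr ⟨⟨0, hL⟩⟩)
      (fun i => |a i - a' i|) with hεdef
  have hε : ∀ i, |a i - a' i| ≤ ε := by
    intro i
    rw [hεdef]
    exact Finset.le_sup' (fun i => |a i - a' i|) (Finset.mem_univ i)
  have hε0 : 0 ≤ ε := le_trans (abs_nonneg _) (hε ⟨0, hL⟩)
  set S : ℝ := ∑ j, Real.exp (a j) with hSdef
  set S' : ℝ := ∑ j, Real.exp (a' j) with hS'def
  have hne : (Finset.univ : Finset (Fin L)).Nonempty := ⟨⟨0, hL⟩, Finset.mem_univ _⟩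
  have hS : 0 < S := Finset.sum_pos (fun j _ => Real.exp_pos _) hne
  have hS' : 0 < S' := Finset.sum_pos (fun j _ => Real.exp_pos _) hne
  -- bounds between S and S'
  have hSS' : S ≤ Real.exp ε * S' := by
    rw [hSdef, hS'def, Finset.mul_sum]
    apply Finset.sum_le_sum
    intro i _
    rw [← Real.exp_add]
    apply Real.exp_le_exp.mpr
    have := (abs_le.mp (hε i)).2
    linarith
  have hS'S : S' ≤ Real.exp ε * S := by
    rw [hS'def, hSdef, Finset.mul_sum]
    apply Finset.sum_le_sum
    intro i _
    rw [← Real.exp_add]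
    apply Real.exp_le_exp.mpr
    have := (abs_le.mp (hε i)).1
    linarith
  set c : ℝ := Real.log S - Real.log S' with hcdef
  have hexpc : Real.exp c = S / S' := by
    rw [hcdef, Real.exp_sub, Real.exp_log hS, Real.exp_log hS']
  have hc : |c| ≤ ε := by
    rw [abs_le]
    constructor
    · have : Real.log S' ≤ Real.log (Real.exp ε * S) := Real.log_le_log hS' hS'S
      rw [Real.log_mul (Real.exp_ne_zero _) hS.ne', Real.log_exp] at this
      simp only [hcdef]
      linarith
    · have : Real.log S ≤ Real.log (Real.exp ε * S') := Real.log_le_log hS hSS'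
      rw [Real.log_mul (Real.exp_ne_zero _) hS'.ne', Real.log_exp] at this
      simp only [hcdef]
      linarith
  have hrw : ∀ i, softmax a' i = Real.exp (a' i + c) / S := by
    intro i
    rw [softmax, Real.exp_add, hexpc]
    field_simp
    ring
  have hsum : ∑ i, Real.exp (a' i + c) = S := by
    simp only [Real.exp_add, ← Finset.sum_mul]
    rw [hexpc, ← hS'def]
    field_simp
  calc ∑ i, |softmax a i - softmax a' i|
      = ∑ i, |Real.exp (a i) - Real.exp (a' i + c)| / S := by
        apply Finset.sum_congr rfl
        intro i _
        rw [softmax, hrw i, div_sub_div_same, abs_div, abs_of_pos hS]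
    _ ≤ ∑ i, (2 * ε * (Real.exp (a i) + Real.exp (a' i + c)) / 2) / S := by
        apply Finset.sum_le_sum
        intro i _
        gcongr
        calc |Real.exp (a i) - Real.exp (a' i + c)|
            ≤ |a i - (a' i + c)| * (Real.exp (a i) + Real.exp (a' i + c)) / 2 :=
              abs_exp_sub_exp_le _ _
          _ ≤ 2 * ε * (Real.exp (a i) + Real.exp (a' i + c)) / 2 := by
              gcongr
              calc |a i - (a' i + c)| ≤ |a i - a' i| + |c| := by
                    rw [show a i - (a' i + c) = (a i - a' i) + (-c) by ring]
                    exact (abs_add_le _ _).trans (by rw [abs_neg])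
                _ ≤ 2 * ε := by linarith [hε i, hc]
    _ = 2 * ε := by
        have heq : ∀ i : Fin L, (2 * ε * (Real.exp (a i) + Real.exp (a' i + c)) / 2) / S
            = (ε / S) * (Real.exp (a i) + Real.exp (a' i + c)) := by
          intro i; ring
        rw [Finset.sum_congr rfl (fun i _ => heq i), ← Finset.mul_sum,
          Finset.sum_add_distrib, ← hSdef, hsum]
        field_simp
        ring
end

section
/- Let d, L ≥ 1, let k_1,…,k_L ∈ ℝ^d be keys with K_max = max_i ‖k_i‖, let p_1,…,p_L ∈ ℝ be scalar token positions with diam P = max_i p_i − min_i p_i, and define the attention centroid c(q) = Σ_{i=1}^L A_i(q) p_i, where A(q) is the attention-weight vector. Then for all q, q' ∈ ℝ^d with q' = q + Δ: |c(q') − c(q)| ≤ (diam P) · Σ_{i=1}^L |A_i(q') − A_i(q)| ≤ 2 (diam P) (K_max/√d) ‖Δ‖. In particular, the attention centroid is Lipschitz-continuous in the query. -/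
open scoped RealInnerProductSpace

/-- Attention weights `A_i(q) = exp(⟨q,k_i⟩/√d) / ∑_j exp(⟨q,k_j⟩/√d)`. -/
noncomputable def attnWeight {d L : ℕ} (k : Fin L → EuclideanSpace ℝ (Fin d))
    (q : EuclideanSpace ℝ (Fin d)) (i : Fin L) : ℝ :=
  Real.exp (⟪q, k i⟫ / Real.sqrt d) / ∑ j, Real.exp (⟪q, k j⟫ / Real.sqrt d)

lemma sinh_le_mul_cosh {u : ℝ} (hu : 0 ≤ u) : Real.sinh u ≤ u * Real.cosh u := by
  have h : ∀ x : ℝ, HasDerivAt (fun x => x * Real.cosh x - Real.sinh x) (x * Real.sinh x) x := by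
    intro x
    have h1 := (hasDerivAt_id x).mul (Real.hasDerivAt_cosh x)
    have h2 := Real.hasDerivAt_sinh x
    exact (h1.sub h2).congr_deriv (by simp only [id, one_mul]; ring)
  have mono : Monotone (fun x => x * Real.cosh x - Real.sinh x) := by
    apply monotone_of_deriv_nonneg
    · exact fun x => (h x).differentiableAt
    · intro x
      rw [(h x).deriv]
      rcases le_total 0 x with hx | hx
      · exact mul_nonneg hx (Real.sinh_nonneg_iff.mpr hx)
      · exact mul_nonneg_iff.mpr (Or.inr ⟨hx, Real.sinh_nonpos_iff.mpr hx⟩)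
  have := mono hu
  simp at this
  linarith

lemma exp_pair {a b ε : ℝ} (hε : 0 ≤ ε) (h : |a - b| ≤ 2 * ε) :
    Real.exp a - Real.exp b ≤ ε * (Real.exp a + Real.exp b) := by
  rcases le_total a b with hab | hab
  · have := Real.exp_le_exp.mpr hab
    nlinarith [Real.exp_pos a, Real.exp_pos b]
  · set u := (a - b) / 2 with hu
    have hu0 : 0 ≤ u := by rw [hu]; linarith
    have huε : u ≤ ε := by rw [abs_le] at h; rw [hu]; linarith
    have hs := sinh_le_mul_cosh hu0
    have hm : Real.exp a - Real.exp b = Real.exp ((a+b)/2) * (2 * Real.sinh u) := by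
      have ea : Real.exp a = Real.exp ((a+b)/2) * Real.exp u := by
        rw [← Real.exp_add]; congr 1; rw [hu]; ring
      have eb : Real.exp b = Real.exp ((a+b)/2) * Real.exp (-u) := by
        rw [← Real.exp_add]; congr 1; rw [hu]; ring
      rw [Real.sinh_eq, ea, eb]
      ring
    have hp : Real.exp a + Real.exp b = Real.exp ((a+b)/2) * (2 * Real.cosh u) := by
      have ea : Real.exp a = Real.exp ((a+b)/2) * Real.exp u := by
        rw [← Real.exp_add]; congr 1; rw [hu]; ring
      have eb : Real.exp b = Real.exp ((a+b)/2) * Real.exp (-u) := by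
        rw [← Real.exp_add]; congr 1; rw [hu]; ring
      rw [Real.cosh_eq, ea, eb]
      ring
    rw [hm, hp]
    have hc : (0:ℝ) < Real.cosh u := Real.cosh_pos u
    have he : (0:ℝ) < Real.exp ((a+b)/2) := Real.exp_pos _
    nlinarith [mul_le_mul_of_nonneg_left hs he.le,
      mul_le_mul_of_nonneg_right huε (mul_pos he hc).le]

lemma softmax_sum_one {L : ℕ} (hne : (Finset.univ : Finset (Fin L)).Nonempty)
    (s : Fin L → ℝ) :
    ∑ i, Real.exp (s i) / (∑ j, Real.exp (s j)) = 1 := by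
  have hZ : 0 < ∑ j, Real.exp (s j) := Finset.sum_pos (fun j _ => Real.exp_pos _) hne
  rw [← Finset.sum_div]
  exact div_self hZ.ne'

/-- L1 stability of softmax: if scores move by at most `ε` each, the softmax
weights move by at most `2ε` in `ℓ¹`. -/
lemma softmax_l1 {L : ℕ} (hne : (Finset.univ : Finset (Fin L)).Nonempty)
    (s s' : Fin L → ℝ) {ε : ℝ} (hε0 : 0 ≤ ε) (hδ : ∀ i, |s' i - s i| ≤ ε) :
    ∑ i, |Real.exp (s' i) / (∑ j, Real.exp (s' j))
      - Real.exp (s i) / (∑ j, Real.exp (s j))| ≤ 2 * ε := by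
  classical
  set Z : ℝ := ∑ j, Real.exp (s j) with hZdef
  set Z' : ℝ := ∑ j, Real.exp (s' j) with hZdef'
  have hZ : 0 < Z := Finset.sum_pos (fun j _ => Real.exp_pos _) hne
  have hZ' : 0 < Z' := Finset.sum_pos (fun j _ => Real.exp_pos _) hne
  set A : Fin L → ℝ := fun i => Real.exp (s i) / Z with hA
  set A' : Fin L → ℝ := fun i => Real.exp (s' i) / Z' with hA'
  have hA1 : ∑ i, A i = 1 := softmax_sum_one hne s
  have hA1' : ∑ i, A' i = 1 := softmax_sum_one hne s'
  set S : Finset (Fin L) := Finset.univ.filter (fun i => A i ≤ A' i) with hSdef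
  set Sc : Finset (Fin L) := Finset.univ.filter (fun i => ¬ (A i ≤ A' i)) with hScdef
  have hsum0 : ∑ i, (A' i - A i) = 0 := by
    rw [Finset.sum_sub_distrib, hA1, hA1']; ring
  have hsplitsum : ∀ f : Fin L → ℝ,
      (∑ i, f i) = (∑ i ∈ S, f i) + (∑ i ∈ Sc, f i) := fun f =>
    (Finset.sum_filter_add_sum_filter_not Finset.univ _ f).symm
  have h2sum : (∑ i, |A' i - A i|) = 2 * ∑ i ∈ S, (A' i - A i) := by
    have e1 : ∑ i ∈ S, |A' i - A i| = ∑ i ∈ S, (A' i - A i) := by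
      apply Finset.sum_congr rfl
      intro i hi
      rw [hSdef, Finset.mem_filter] at hi
      exact abs_of_nonneg (sub_nonneg.mpr hi.2)
    have e2 : ∑ i ∈ Sc, |A' i - A i| = -∑ i ∈ Sc, (A' i - A i) := by
      rw [← Finset.sum_neg_distrib]
      apply Finset.sum_congr rfl
      intro i hi
      rw [hScdef, Finset.mem_filter] at hi
      rw [abs_of_nonpos (by linarith [lt_of_not_ge hi.2])]
    have e3 := hsplitsum (fun i => |A' i - A i|)
    have e4 := hsplitsum (fun i => A' i - A i)
    rw [hsum0] at e4
    linarith [e3, e4, e1, e2]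
  have hScore : ∑ i ∈ S, (A' i - A i) ≤ ε := by
    have hrep : ∑ i ∈ S, (A' i - A i)
        = ((∑ i ∈ S, Real.exp (s' i)) * Z - (∑ i ∈ S, Real.exp (s i)) * Z') / (Z' * Z) := by
      rw [Finset.sum_sub_distrib]
      simp only [hA, hA']
      rw [← Finset.sum_div, ← Finset.sum_div]
      field_simp
    rw [hrep, div_le_iff₀ (mul_pos hZ' hZ)]
    have hN : (∑ i ∈ S, Real.exp (s' i)) * Z - (∑ i ∈ S, Real.exp (s i)) * Z'
        = ∑ i ∈ S, ∑ j ∈ Sc, (Real.exp (s' i) * Real.exp (s j)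
            - Real.exp (s i) * Real.exp (s' j)) := by
      calc (∑ i ∈ S, Real.exp (s' i)) * Z - (∑ i ∈ S, Real.exp (s i)) * Z'
          = (∑ i ∈ S, Real.exp (s' i)) * (∑ j ∈ Sc, Real.exp (s j))
            - (∑ i ∈ S, Real.exp (s i)) * (∑ j ∈ Sc, Real.exp (s' j)) := by
            rw [hZdef, hZdef', hsplitsum (fun j => Real.exp (s j)),
              hsplitsum (fun j => Real.exp (s' j))]
            ring
        _ = ∑ i ∈ S, ∑ j ∈ Sc, (Real.exp (s' i) * Real.exp (s j)
              - Real.exp (s i) * Real.exp (s' j)) := by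
            rw [Finset.sum_mul_sum S Sc, Finset.sum_mul_sum S Sc]
            simp only [Finset.sum_sub_distrib]
    rw [hN]
    have hbound : ∑ i ∈ S, ∑ j ∈ Sc, (Real.exp (s' i) * Real.exp (s j)
          - Real.exp (s i) * Real.exp (s' j))
        ≤ ∑ i ∈ S, ∑ j ∈ Sc, ε * (Real.exp (s' i) * Real.exp (s j)
          + Real.exp (s i) * Real.exp (s' j)) := by
      apply Finset.sum_le_sum
      intro i _
      apply Finset.sum_le_sum
      intro j _
      rw [← Real.exp_add, ← Real.exp_add]
      apply exp_pair hε0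
      have he : (s' i + s j) - (s i + s' j) = (s' i - s i) - (s' j - s j) := by ring
      rw [he]
      calc |(s' i - s i) - (s' j - s j)| ≤ |s' i - s i| + |s' j - s j| := abs_sub _ _
        _ ≤ 2 * ε := by linarith [hδ i, hδ j]
    refine hbound.trans ?_
    have hfac : ∑ i ∈ S, ∑ j ∈ Sc, ε * (Real.exp (s' i) * Real.exp (s j)
          + Real.exp (s i) * Real.exp (s' j))
        = ε * ((∑ i ∈ S, ∑ j ∈ Sc, Real.exp (s' i) * Real.exp (s j))
          + (∑ i ∈ S, ∑ j ∈ Sc, Real.exp (s i) * Real.exp (s' j))) := by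
      simp only [← Finset.mul_sum, Finset.sum_add_distrib]
    rw [hfac]
    apply mul_le_mul_of_nonneg_left _ hε0
    have hswap : (∑ i ∈ S, ∑ j ∈ Sc, Real.exp (s i) * Real.exp (s' j))
        = ∑ i ∈ Sc, ∑ j ∈ S, Real.exp (s' i) * Real.exp (s j) := by
      rw [Finset.sum_comm]
      exact Finset.sum_congr rfl fun i _ => Finset.sum_congr rfl fun j _ => mul_comm _ _
    rw [hswap]
    have hZZ : Z' * Z = ((∑ i ∈ S, ∑ j ∈ S, Real.exp (s' i) * Real.exp (s j))
          + (∑ i ∈ S, ∑ j ∈ Sc, Real.exp (s' i) * Real.exp (s j)))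
        + ((∑ i ∈ Sc, ∑ j ∈ S, Real.exp (s' i) * Real.exp (s j))
          + (∑ i ∈ Sc, ∑ j ∈ Sc, Real.exp (s' i) * Real.exp (s j))) := by
      rw [hZdef, hZdef', hsplitsum (fun j => Real.exp (s j)),
        hsplitsum (fun j => Real.exp (s' j)), add_mul, mul_add, mul_add,
        Finset.sum_mul_sum S S, Finset.sum_mul_sum S Sc,
        Finset.sum_mul_sum Sc S, Finset.sum_mul_sum Sc Sc]
    rw [hZZ]
    have n1 : 0 ≤ ∑ i ∈ S, ∑ j ∈ S, Real.exp (s' i) * Real.exp (s j) :=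
      Finset.sum_nonneg fun i _ => Finset.sum_nonneg fun j _ =>
        (mul_pos (Real.exp_pos _) (Real.exp_pos _)).le
    have n2 : 0 ≤ ∑ i ∈ Sc, ∑ j ∈ Sc, Real.exp (s' i) * Real.exp (s j) :=
      Finset.sum_nonneg fun i _ => Finset.sum_nonneg fun j _ =>
        (mul_pos (Real.exp_pos _) (Real.exp_pos _)).le
    linarith
  rw [h2sum]
  linarith

/-- Centroid drift bound from the `ℓ¹` distance of weights. -/
lemma centroid_bound {L : ℕ} (A A' p : Fin L → ℝ) (m M : ℝ)
    (hA1 : ∑ i, A i = 1) (hA1' : ∑ i, A' i = 1)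
    (hm : ∀ i, m ≤ p i) (hM : ∀ i, p i ≤ M) :
    |(∑ i, A' i * p i) - (∑ i, A i * p i)| ≤ (M - m) * ∑ i, |A' i - A i| := by
  have hc : ∀ (B : Fin L → ℝ), (∑ i, B i) = 1 →
      ∑ i, B i * (p i - m) = (∑ i, B i * p i) - m := by
    intro B hB
    simp only [mul_sub, Finset.sum_sub_distrib]
    rw [← Finset.sum_mul, hB, one_mul]
  have hkey : (∑ i, A' i * p i) - (∑ i, A i * p i)
      = ∑ i, (A' i - A i) * (p i - m) := by
    simp only [sub_mul, Finset.sum_sub_distrib]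
    rw [hc A' hA1', hc A hA1]
    ring
  rw [hkey]
  calc |∑ i, (A' i - A i) * (p i - m)| ≤ ∑ i, |(A' i - A i) * (p i - m)| :=
        Finset.abs_sum_le_sum_abs _ _
    _ ≤ ∑ i, |A' i - A i| * (M - m) := by
        apply Finset.sum_le_sum
        intro i _
        rw [abs_mul]
        apply mul_le_mul_of_nonneg_left _ (abs_nonneg _)
        rw [abs_of_nonneg (by linarith [hm i])]
        linarith [hM i]
    _ = (M - m) * ∑ i, |A' i - A i| := by rw [← Finset.sum_mul]; ring

set_option maxHeartbeats 1000000 in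
/-- the attention centroid `c(q) = ∑ᵢ Aᵢ(q) pᵢ` drifts by at most
`(diam P) · ‖A(q') − A(q)‖₁ ≤ 2 (diam P) (K_max/√d) ‖Δ‖` when `q' = q + Δ`:
the centroid is Lipschitz-continuous in the query. -/
theorem centroid_drift (d L : ℕ) (hd : 1 ≤ d) (hL : 1 ≤ L)
    (k : Fin L → EuclideanSpace ℝ (Fin d)) (p : Fin L → ℝ)
    (Kmax diamP : ℝ)
    (hK : Kmax = Finset.univ.sup' (Finset.univ_nonempty_iff.mpr ⟨⟨0, hL⟩⟩)
      fun i => ‖k i‖)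
    (hdiam : diamP =
      (Finset.univ.sup' (Finset.univ_nonempty_iff.mpr ⟨⟨0, hL⟩⟩) p) -
      (Finset.univ.inf' (Finset.univ_nonempty_iff.mpr ⟨⟨0, hL⟩⟩) p))
    (q q' Δ : EuclideanSpace ℝ (Fin d)) (hq' : q' = q + Δ) :
    |(∑ i, attnWeight k q' i * p i) - (∑ i, attnWeight k q i * p i)| ≤
      diamP * ∑ i, |attnWeight k q' i - attnWeight k q i| ∧
    diamP * (∑ i, |attnWeight k q' i - attnWeight k q i|) ≤
      2 * diamP * (Kmax / Real.sqrt d) * ‖Δ‖ := by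
  have hne : (Finset.univ : Finset (Fin L)).Nonempty :=
    Finset.univ_nonempty_iff.mpr ⟨⟨0, hL⟩⟩
  have hsd : (0:ℝ) < Real.sqrt d := by
    apply Real.sqrt_pos.mpr
    exact_mod_cast Nat.lt_of_lt_of_le Nat.zero_lt_one hd
  have hK0 : 0 ≤ Kmax := by
    rw [hK]
    have h2 := Finset.le_sup' (s := (Finset.univ : Finset (Fin L))) (fun i => ‖k i‖)
      (Finset.mem_univ (⟨0, hL⟩ : Fin L))
    exact le_trans (norm_nonneg _) h2
  have hdP : 0 ≤ diamP := by
    rw [hdiam]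
    have h1 : Finset.univ.inf' hne p ≤ p ⟨0, hL⟩ :=
      Finset.inf'_le p (Finset.mem_univ (⟨0, hL⟩ : Fin L))
    have h2 : p ⟨0, hL⟩ ≤ Finset.univ.sup' hne p :=
      Finset.le_sup' p (Finset.mem_univ (⟨0, hL⟩ : Fin L))
    linarith
  -- score functions
  have hAe : ∀ (q0 : EuclideanSpace ℝ (Fin d)) (i : Fin L),
      attnWeight k q0 i = Real.exp (⟪q0, k i⟫ / Real.sqrt d)
        / (∑ j, Real.exp (⟪q0, k j⟫ / Real.sqrt d)) := fun _ _ => rfl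
  have hA1 : ∑ i, attnWeight k q i = 1 := by
    simp only [hAe]
    exact softmax_sum_one hne _
  have hA1' : ∑ i, attnWeight k q' i = 1 := by
    simp only [hAe]
    exact softmax_sum_one hne _
  set ε : ℝ := Kmax / Real.sqrt d * ‖Δ‖ with hεdef
  have hε0 : 0 ≤ ε := mul_nonneg (div_nonneg hK0 hsd.le) (norm_nonneg Δ)
  have hδ : ∀ i, |⟪q', k i⟫ / Real.sqrt d - ⟪q, k i⟫ / Real.sqrt d| ≤ ε := by
    intro i
    have h1 : ⟪q', k i⟫ / Real.sqrt d - ⟪q, k i⟫ / Real.sqrt d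
        = ⟪Δ, k i⟫ / Real.sqrt d := by
      rw [hq', inner_add_left]
      ring
    rw [h1, abs_div, abs_of_pos hsd, div_le_iff₀ hsd]
    have h2 : |⟪Δ, k i⟫| ≤ ‖Δ‖ * ‖k i‖ := abs_real_inner_le_norm Δ (k i)
    have h3 : ‖k i‖ ≤ Kmax := by
      have h4 := Finset.le_sup' (s := (Finset.univ : Finset (Fin L))) (fun i => ‖k i‖)
        (Finset.mem_univ i)
      rw [hK]; exact h4
    calc |⟪Δ, k i⟫| ≤ ‖Δ‖ * ‖k i‖ := h2
      _ ≤ ‖Δ‖ * Kmax := mul_le_mul_of_nonneg_left h3 (norm_nonneg Δ)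
      _ = ε * Real.sqrt d := by rw [hεdef]; field_simp
  have hT : (∑ i, |attnWeight k q' i - attnWeight k q i|) ≤ 2 * ε := by
    simp only [hAe]
    exact softmax_l1 hne (fun i => ⟪q, k i⟫ / Real.sqrt d)
      (fun i => ⟪q', k i⟫ / Real.sqrt d) hε0 hδ
  constructor
  · have := centroid_bound (attnWeight k q) (attnWeight k q') p
      (Finset.univ.inf' hne p) (Finset.univ.sup' hne p) hA1 hA1'
      (fun i => Finset.inf'_le p (Finset.mem_univ i))
      (fun i => Finset.le_sup' p (Finset.mem_univ i))
    rw [← hdiam] at this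
    exact this
  · calc diamP * (∑ i, |attnWeight k q' i - attnWeight k q i|) ≤ diamP * (2 * ε) :=
        mul_le_mul_of_nonneg_left hT hdP
      _ = 2 * diamP * (Kmax / Real.sqrt d) * ‖Δ‖ := by rw [hεdef]; ring
end

section
/- Let d, L ≥ 1, let k_1,…,k_L ∈ ℝ^d be keys with K_max = max_i ‖k_i‖, and let q, q' ∈ ℝ^d be unit vectors (‖q‖ = ‖q'‖ = 1) with cosine similarity ⟨q, q'⟩ ≥ τ for some τ ≤ 1. Then the ℓ1 variation of the attention weights satisfies Σ_{i=1}^L |A_i(q') − A_i(q)| ≤ (2 K_max/√d) · ‖q' − q‖ = (2 K_max/√d) · √(2 − 2⟨q,q'⟩) ≤ (2 K_max/√d) · √(2 − 2τ). -/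
open scoped RealInnerProductSpace

lemma tanh_aux' (x : ℝ) (hx : 0 ≤ x) :
    Real.exp (2*x) - 1 ≤ x * (Real.exp (2*x) + 1) := by
  have key : ∀ y : ℝ, 0 ≤ 1 + (2*y-1)*Real.exp (2*y) := by
    intro y
    have h1 : 1 - 2*y ≤ Real.exp (-(2*y)) := by
      have := Real.add_one_le_exp (-(2*y)); linarith
    have h2 : Real.exp (2*y) * Real.exp (-(2*y)) = 1 := by
      rw [← Real.exp_add]; simp
    nlinarith [Real.exp_pos (2*y), Real.exp_pos (-(2*y))]
  have hf : ∀ y : ℝ, HasDerivAt (fun z : ℝ => z*(Real.exp (2*z)+1) - (Real.exp (2*z)-1))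
      (1 + (2*y-1)*Real.exp (2*y)) y := by
    intro y
    have h1 : HasDerivAt (fun z : ℝ => 2*z) 2 y := by
      simpa using (hasDerivAt_id y).const_mul 2
    have h2 : HasDerivAt (fun z : ℝ => Real.exp (2*z)) (Real.exp (2*y) * 2) y :=
      (Real.hasDerivAt_exp (2*y)).comp y h1
    have h3 := ((hasDerivAt_id y).mul (h2.add_const 1)).sub (h2.sub_const 1)
    exact h3.congr_deriv (by simp only [id_eq]; ring)
  have hmono : Monotone (fun z : ℝ => z*(Real.exp (2*z)+1) - (Real.exp (2*z)-1)) := by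
    apply monotone_of_deriv_nonneg
    · exact fun y => (hf y).differentiableAt
    · intro y; rw [(hf y).deriv]; exact key y
  have := hmono hx
  simp at this
  linarith [this]

lemma softmax_l1' {L : ℕ} (hL : 0 < L) (x y : Fin L → ℝ) (ε : ℝ) (hε : 0 ≤ ε)
    (h : ∀ i, |x i - y i| ≤ ε) :
    ∑ i, |Real.exp (x i) / ∑ j, Real.exp (x j) -
      Real.exp (y i) / ∑ j, Real.exp (y j)| ≤ 2 * ε := by
  have hne : (Finset.univ : Finset (Fin L)).Nonempty := ⟨⟨0, hL⟩, Finset.mem_univ _⟩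
  set S := ∑ j, Real.exp (x j) with hS
  set T := ∑ j, Real.exp (y j) with hT
  have hSpos : 0 < S := Finset.sum_pos (fun i _ => Real.exp_pos _) hne
  have hTpos : 0 < T := Finset.sum_pos (fun i _ => Real.exp_pos _) hne
  set p : Fin L → ℝ := fun i => Real.exp (x i) / S with hp
  set Q : Fin L → ℝ := fun i => Real.exp (y i) / T with hQ
  set E := Real.exp (2*ε) with hE
  have hE1 : 1 ≤ E := Real.one_le_exp (by linarith)
  have hExy : ∀ i, Real.exp (x i) ≤ Real.exp ε * Real.exp (y i) := by
    intro i
    rw [← Real.exp_add]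
    exact Real.exp_le_exp.mpr (by have := abs_le.mp (h i); linarith [this.2])
  have hEyx : ∀ i, Real.exp (y i) ≤ Real.exp ε * Real.exp (x i) := by
    intro i
    rw [← Real.exp_add]
    exact Real.exp_le_exp.mpr (by have := abs_le.mp (h i); linarith [this.1])
  have hST : S ≤ Real.exp ε * T := by
    rw [hS, hT, Finset.mul_sum]; exact Finset.sum_le_sum fun i _ => hExy i
  have hTS : T ≤ Real.exp ε * S := by
    rw [hT, hS, Finset.mul_sum]; exact Finset.sum_le_sum fun i _ => hEyx i
  have hEE : E = Real.exp ε * Real.exp ε := by rw [hE, ← Real.exp_add]; ring_nf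
  have hpQ : ∀ i, p i ≤ E * Q i := by
    intro i
    rw [hp, hQ]
    simp only
    rw [show E * (Real.exp (y i) / T) = (E * Real.exp (y i)) / T from (mul_div_assoc _ _ _).symm,
      div_le_div_iff₀ hSpos hTpos]
    have h1 : Real.exp (x i) * T ≤ (Real.exp ε * Real.exp (y i)) * (Real.exp ε * S) :=
      mul_le_mul (hExy i) hTS hTpos.le (by positivity)
    have h2 : (Real.exp ε * Real.exp (y i)) * (Real.exp ε * S) = E * Real.exp (y i) * S := by
      rw [hEE]; ring
    linarith
  have hQp : ∀ i, Q i ≤ E * p i := by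
    intro i
    rw [hp, hQ]
    simp only
    rw [show E * (Real.exp (x i) / S) = (E * Real.exp (x i)) / S from (mul_div_assoc _ _ _).symm,
      div_le_div_iff₀ hTpos hSpos]
    have h1 : Real.exp (y i) * S ≤ (Real.exp ε * Real.exp (x i)) * (Real.exp ε * T) :=
      mul_le_mul (hEyx i) hST hSpos.le (by positivity)
    have h2 : (Real.exp ε * Real.exp (x i)) * (Real.exp ε * T) = E * Real.exp (x i) * T := by
      rw [hEE]; ring
    linarith
  have hsump : ∑ i, p i = 1 := by
    rw [hp]; rw [← Finset.sum_div]; exact div_self hSpos.ne'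
  have hsumQ : ∑ i, Q i = 1 := by
    rw [hQ]; rw [← Finset.sum_div]; exact div_self hTpos.ne'
  set F := Finset.univ.filter (fun i => Q i < p i) with hF
  set G := Finset.univ.filter (fun i => ¬ Q i < p i) with hG
  have habs : ∑ i, |p i - Q i| = ∑ i ∈ F, (p i - Q i) + ∑ i ∈ G, (Q i - p i) := by
    rw [← Finset.sum_filter_add_sum_filter_not Finset.univ (fun i => Q i < p i)
      (fun i => |p i - Q i|)]
    congr 1
    · apply Finset.sum_congr rfl; intro i hi
      have := (Finset.mem_filter.mp hi).2
      exact abs_of_pos (by linarith)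
    · apply Finset.sum_congr rfl; intro i hi
      have := (Finset.mem_filter.mp hi).2
      push_neg at this
      rw [abs_sub_comm]
      exact abs_of_nonneg (by linarith)
  have hsplitp : ∑ i ∈ F, p i + ∑ i ∈ G, p i = 1 := by
    rw [← hsump]
    exact Finset.sum_filter_add_sum_filter_not Finset.univ _ _
  have hsplitQ : ∑ i ∈ F, Q i + ∑ i ∈ G, Q i = 1 := by
    rw [← hsumQ]
    exact Finset.sum_filter_add_sum_filter_not Finset.univ _ _
  have hPA : ∑ i ∈ F, p i ≤ E * ∑ i ∈ F, Q i := by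
    rw [Finset.mul_sum]; exact Finset.sum_le_sum fun i _ => hpQ i
  have hQB : ∑ i ∈ G, Q i ≤ E * ∑ i ∈ G, p i := by
    rw [Finset.mul_sum]; exact Finset.sum_le_sum fun i _ => hQp i
  have hA0 : 0 ≤ ∑ i ∈ F, Q i := Finset.sum_nonneg fun i _ => by
    have := Real.exp_pos (y i); rw [hQ]; positivity
  have hB0 : 0 ≤ ∑ i ∈ G, p i := Finset.sum_nonneg fun i _ => by
    have := Real.exp_pos (x i); rw [hp]; positivity
  have htanh : E - 1 ≤ ε * (E + 1) := tanh_aux' ε hε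
  have hgoal : ∑ i, |p i - Q i| ≤ 2 * ε := by
    rw [habs, Finset.sum_sub_distrib, Finset.sum_sub_distrib]
    set P := ∑ i ∈ F, p i
    set A := ∑ i ∈ F, Q i
    set B := ∑ i ∈ G, p i
    set C := ∑ i ∈ G, Q i
    have h1 : P - A ≤ E*A - A := by linarith
    have h2 : C - B ≤ E*B - B := by linarith
    have h3 : C - B = P - A := by linarith
    have h4 : A + B = 1 - (P - A) := by linarith
    have h5 : E*A + E*B = E*(1 - (P - A)) := by rw [← h4]; ring
    have ht : P - A ≤ ε := by nlinarith [h1, h2, h3, h5, htanh, hE1]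
    linarith
  simpa [hp, hQ] using hgoal

/-- for unit queries `q, q'` with cosine similarity `⟨q,q'⟩ ≥ τ`, the ℓ1
variation of attention weights satisfies
`∑ᵢ |Aᵢ(q') − Aᵢ(q)| ≤ (2K_max/√d)‖q'−q‖ = (2K_max/√d)√(2−2⟨q,q'⟩) ≤ (2K_max/√d)√(2−2τ)`. -/
theorem attention_variation_of_similarity (d L : ℕ) (hd : 1 ≤ d) (hL : 1 ≤ L)
    (k : Fin L → EuclideanSpace ℝ (Fin d)) (Kmax : ℝ)
    (hK : Kmax = Finset.univ.sup' (Finset.univ_nonempty_iff.mpr ⟨⟨0, hL⟩⟩)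
      fun i => ‖k i‖)
    (q q' : EuclideanSpace ℝ (Fin d)) (hq : ‖q‖ = 1) (hq' : ‖q'‖ = 1)
    (τ : ℝ) (hτ : τ ≤ 1) (hsim : τ ≤ ⟪q, q'⟫) :
    (∑ i, |attnWeight k q' i - attnWeight k q i| ≤
        2 * Kmax / Real.sqrt d * ‖q' - q‖) ∧
    (2 * Kmax / Real.sqrt d * ‖q' - q‖ =
        2 * Kmax / Real.sqrt d * Real.sqrt (2 - 2 * ⟪q, q'⟫)) ∧
    (2 * Kmax / Real.sqrt d * Real.sqrt (2 - 2 * ⟪q, q'⟫) ≤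
        2 * Kmax / Real.sqrt d * Real.sqrt (2 - 2 * τ)) := by
  have hd0 : (0:ℝ) < Real.sqrt d :=
    Real.sqrt_pos.mpr (by exact_mod_cast Nat.lt_of_lt_of_le Nat.zero_lt_one hd)
  have hki : ∀ i, ‖k i‖ ≤ Kmax := by
    intro i; rw [hK]
    exact Finset.le_sup' (f := fun i => ‖k i‖) (Finset.mem_univ i)
  have hK0 : 0 ≤ Kmax := le_trans (norm_nonneg (k ⟨0, hL⟩)) (hki ⟨0, hL⟩)
  have habs : ∀ i, |⟪q' - q, k i⟫| ≤ Kmax * ‖q' - q‖ := by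
    intro i
    calc |⟪q' - q, k i⟫| ≤ ‖q' - q‖ * ‖k i‖ := abs_real_inner_le_norm _ _
    _ ≤ ‖q' - q‖ * Kmax := mul_le_mul_of_nonneg_left (hki i) (norm_nonneg _)
    _ = Kmax * ‖q' - q‖ := mul_comm _ _
  have hbound : ∀ i, |⟪q', k i⟫ / Real.sqrt d - ⟪q, k i⟫ / Real.sqrt d| ≤
      Kmax * ‖q' - q‖ / Real.sqrt d := by
    intro i
    rw [div_sub_div_same, abs_div, abs_of_pos hd0]
    gcongr
    rw [← inner_sub_left]
    exact habs i
  have hεnn : 0 ≤ Kmax * ‖q' - q‖ / Real.sqrt d := by positivity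
  have h1 : ∑ i, |attnWeight k q' i - attnWeight k q i| ≤
      2 * Kmax / Real.sqrt d * ‖q' - q‖ := by
    have := softmax_l1' hL (fun i => ⟪q', k i⟫ / Real.sqrt d)
      (fun i => ⟪q, k i⟫ / Real.sqrt d) (Kmax * ‖q' - q‖ / Real.sqrt d) hεnn hbound
    have heq : 2 * (Kmax * ‖q' - q‖ / Real.sqrt d) = 2 * Kmax / Real.sqrt d * ‖q' - q‖ := by
      ring
    simp only [attnWeight]
    rw [← heq]
    exact this
  have hsq : ‖q' - q‖^2 = 2 - 2*⟪q,q'⟫ := by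
    rw [@norm_sub_sq_real, hq, hq', real_inner_comm]; ring
  have hnorm : ‖q' - q‖ = Real.sqrt (2 - 2*⟪q,q'⟫) := by
    rw [← hsq, Real.sqrt_sq (norm_nonneg _)]
  refine ⟨h1, by rw [hnorm], ?_⟩
  apply mul_le_mul_of_nonneg_left
  · exact Real.sqrt_le_sqrt (by linarith)
  · positivity
end

section
/- Let m ≥ 2 and let P and Q be probability vectors on a finite set of cardinality m whose total variation distance ε = (1/2) Σ_i |P_i − Q_i| satisfies ε ≤ 1 − 1/m. Then the Shannon entropies satisfy the continuity bound |H(P) − H(Q)| ≤ h_b(ε) + ε log(m − 1); in particular |H(P) − H(Q)| ≤ h_b(ε) + ε log m. -/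
/-- The binary entropy function (natural logarithm). -/
noncomputable def binEntropy (x : ℝ) : ℝ :=
  -x * Real.log x - (1 - x) * Real.log (1 - x)

/-- The Shannon entropy of a vector `P` on a finite type (natural logarithm,
with the convention `0 log 0 = 0` built into `Real.log 0 = 0`). -/
noncomputable def shannonEntropy {α : Type*} [Fintype α] (P : α → ℝ) : ℝ :=
  -∑ i, P i * Real.log (P i)

open Finset in
lemma entropy_key (m : ℕ) (hm : 2 ≤ m) (P Q : Fin m → ℝ)
    (hP0 : ∀ i, 0 ≤ P i) (hP1 : ∑ i, P i = 1)
    (hQ0 : ∀ i, 0 ≤ Q i) (hQ1 : ∑ i, Q i = 1)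
    (ε : ℝ) (hε : ε = (1 / 2) * ∑ i, |P i - Q i|) (hεpos : 0 < ε) :
    shannonEntropy P - shannonEntropy Q ≤ binEntropy ε + ε * Real.log ((m : ℝ) - 1) := by
  have hm2 : (2:ℝ) ≤ (m:ℝ) := by exact_mod_cast hm
  have hm1pos : (0:ℝ) < (m:ℝ) - 1 := by linarith
  set R : Fin m → ℝ := fun i => min (P i) (Q i) with hRdef
  have hR0 : ∀ i, 0 ≤ R i := fun i => le_min (hP0 i) (hQ0 i)
  have hRP : ∀ i, R i ≤ P i := fun i => min_le_left _ _
  have hRQ : ∀ i, R i ≤ Q i := fun i => min_le_right _ _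
  have hPR : ∀ i, P i - R i = (|P i - Q i| + (P i - Q i)) / 2 := by
    intro i
    rcases le_total (P i) (Q i) with h | h
    · rw [show R i = P i from min_eq_left h, abs_of_nonpos (by linarith : P i - Q i ≤ 0)]
      ring
    · rw [show R i = Q i from min_eq_right h, abs_of_nonneg (by linarith : 0 ≤ P i - Q i)]
      ring
  have hQR : ∀ i, Q i - R i = (|P i - Q i| - (P i - Q i)) / 2 := by
    intro i
    rcases le_total (P i) (Q i) with h | h
    · rw [show R i = P i from min_eq_left h, abs_of_nonpos (by linarith : P i - Q i ≤ 0)]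
      ring
    · rw [show R i = Q i from min_eq_right h, abs_of_nonneg (by linarith : 0 ≤ P i - Q i)]
      ring
  have hsumPR : ∑ i, (P i - R i) = ε := by
    rw [Finset.sum_congr rfl (fun i _ => hPR i), ← Finset.sum_div,
      Finset.sum_add_distrib, Finset.sum_sub_distrib, hP1, hQ1, hε]
    ring
  have hsumQR : ∑ i, (Q i - R i) = ε := by
    rw [Finset.sum_congr rfl (fun i _ => hQR i), ← Finset.sum_div,
      Finset.sum_sub_distrib, Finset.sum_sub_distrib, hP1, hQ1, hε]
    ring
  have hsumR : ∑ i, R i = 1 - ε := by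
    have h := Finset.sum_sub_distrib (s := (univ : Finset (Fin m)))
      (f := P) (g := R)
    rw [hsumPR] at h
    rw [hP1] at h
    linarith
  have horth : ∀ i, (P i - R i) * (Q i - R i) = 0 := by
    intro i
    rcases le_total (P i) (Q i) with h | h
    · rw [show R i = P i from min_eq_left h, sub_self, zero_mul]
    · rw [show R i = Q i from min_eq_right h, sub_self, mul_zero]
  set J : Fin m → Fin m → ℝ :=
    fun i j => if i = j then R i else (P i - R i) * (Q j - R j) / ε with hJdef
  have hJ0 : ∀ i j, 0 ≤ J i j := by
    intro i j
    by_cases h : i = j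
    · simp only [hJdef, if_pos h]; exact hR0 i
    · simp only [hJdef, if_neg h]
      exact div_nonneg (mul_nonneg (by linarith [hRP i]) (by linarith [hRQ j])) hεpos.le
  have hdiag : ∀ i, J i i = R i := fun i => by simp [hJdef]
  have hrow : ∀ i, ∑ j, J i j = P i := by
    intro i
    rw [← Finset.add_sum_erase _ _ (Finset.mem_univ i), hdiag]
    have h1 : ∑ j ∈ univ.erase i, J i j
        = ∑ j ∈ univ.erase i, (P i - R i) * (Q j - R j) / ε := by
      refine Finset.sum_congr rfl fun j hj => ?_
      have hij : i ≠ j := (Finset.ne_of_mem_erase hj).symm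
      simp [hJdef, hij]
    rw [h1, ← Finset.sum_div, ← Finset.mul_sum]
    have h3 : ∑ j ∈ univ.erase i, (Q j - R j) = ε - (Q i - R i) := by
      have h := Finset.add_sum_erase univ (fun j => Q j - R j) (Finset.mem_univ i)
      rw [hsumQR] at h
      linarith
    rw [h3, show (P i - R i) * (ε - (Q i - R i)) = (P i - R i) * ε by
      rw [mul_sub, horth i, sub_zero], mul_div_assoc, div_self hεpos.ne', mul_one]
    ring
  have hcol : ∀ j, ∑ i, J i j = Q j := by
    intro j
    rw [← Finset.add_sum_erase _ _ (Finset.mem_univ j), hdiag]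
    have h1 : ∑ i ∈ univ.erase j, J i j
        = ∑ i ∈ univ.erase j, (Q j - R j) * (P i - R i) / ε := by
      refine Finset.sum_congr rfl fun i hi => ?_
      have hij : i ≠ j := Finset.ne_of_mem_erase hi
      simp only [hJdef, if_neg hij]
      ring
    rw [h1, ← Finset.sum_div, ← Finset.mul_sum]
    have h3 : ∑ i ∈ univ.erase j, (P i - R i) = ε - (P j - R j) := by
      have h := Finset.add_sum_erase univ (fun i => P i - R i) (Finset.mem_univ j)
      rw [hsumPR] at h
      linarith
    rw [h3, show (Q j - R j) * (ε - (P j - R j)) = (Q j - R j) * ε by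
      rw [mul_sub, mul_comm (Q j - R j) (P j - R j), horth j, sub_zero],
      mul_div_assoc, div_self hεpos.ne', mul_one]
    ring
  have hJP : ∀ i j, J i j ≤ P i := by
    intro i j
    rw [← hrow i]
    exact Finset.single_le_sum (fun k _ => hJ0 i k) (Finset.mem_univ j)
  have hJQ : ∀ i j, J i j ≤ Q j := by
    intro i j
    rw [← hcol j]
    exact Finset.single_le_sum (fun k _ => hJ0 k j) (Finset.mem_univ i)
  have hε1 : 0 ≤ 1 - ε := by
    have : 0 ≤ ∑ i, R i := Finset.sum_nonneg fun i _ => hR0 i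
    linarith [hsumR]
  -- Step B : ∑∑ J log J ≤ ∑ P log P
  have hB : ∑ i, ∑ j, J i j * Real.log (J i j) ≤ ∑ i, P i * Real.log (P i) := by
    refine Finset.sum_le_sum fun i _ => ?_
    have hphi : P i * Real.log (P i) = ∑ j, J i j * Real.log (P i) := by
      rw [← Finset.sum_mul, hrow]
    rw [hphi]
    refine Finset.sum_le_sum fun j _ => ?_
    rcases eq_or_lt_of_le (hJ0 i j) with h0 | h0
    · rw [← h0]; simp
    · exact mul_le_mul_of_nonneg_left (Real.log_le_log h0 (hJP i j)) (hJ0 i j)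
  -- rewrite H(Q)
  have hQrw : ∑ j, Q j * Real.log (Q j) = ∑ i, ∑ j, J i j * Real.log (Q j) := by
    rw [Finset.sum_comm]
    refine Finset.sum_congr rfl fun j _ => ?_
    rw [← Finset.sum_mul, hcol]
  set M : Fin m → Fin m → ℝ :=
    fun i j => if i = j then Q j * (1 - ε) else Q j * (ε / ((m:ℝ) - 1)) with hMdef
  have hM0 : ∀ i j, 0 ≤ M i j := by
    intro i j
    by_cases h : i = j
    · simp only [hMdef, if_pos h]; exact mul_nonneg (hQ0 j) hε1
    · simp only [hMdef, if_neg h]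
      exact mul_nonneg (hQ0 j) (div_nonneg hεpos.le hm1pos.le)
  have hterm : ∀ i j, J i j * (Real.log (Q j) - Real.log (J i j))
      ≤ (M i j - J i j) + J i j * (Real.log (Q j) - Real.log (M i j)) := by
    intro i j
    rcases eq_or_lt_of_le (hJ0 i j) with h0 | h0
    · rw [← h0]; simpa using hM0 i j
    · have hQj : 0 < Q j := lt_of_lt_of_le h0 (hJQ i j)
      have hMpos : 0 < M i j := by
        by_cases h : i = j
        · have hRi : 0 < R i := by
            have := hdiag i
            subst h
            rw [hdiag i] at h0
            exact h0
          have h1ε : R i ≤ 1 - ε := by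
            rw [← hsumR]
            exact Finset.single_le_sum (fun k _ => hR0 k) (Finset.mem_univ i)
          have : R i ≤ 1 - ε := h1ε
          simp only [hMdef, if_pos h]
          exact mul_pos hQj (lt_of_lt_of_le hRi (h ▸ h1ε))
        · simp only [hMdef, if_neg h]
          exact mul_pos hQj (div_pos hεpos hm1pos)
      have hlog : Real.log (M i j) - Real.log (J i j) ≤ M i j / J i j - 1 := by
        rw [← Real.log_div hMpos.ne' h0.ne']
        exact Real.log_le_sub_one_of_pos (div_pos hMpos h0)
      have h2 : J i j * (Real.log (M i j) - Real.log (J i j)) ≤ M i j - J i j := by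
        have h3 := mul_le_mul_of_nonneg_left hlog h0.le
        have h4 : J i j * (M i j / J i j - 1) = M i j - J i j := by
          field_simp
        linarith [h3, h4.le]
      nlinarith [h2]
  have hsumM : ∑ i, ∑ j, M i j = 1 := by
    rw [Finset.sum_comm]
    have hcolM : ∀ j, ∑ i, M i j = Q j := by
      intro j
      rw [← Finset.add_sum_erase _ _ (Finset.mem_univ j)]
      have h1 : ∑ i ∈ univ.erase j, M i j
          = ∑ i ∈ univ.erase j, Q j * (ε / ((m:ℝ) - 1)) := by
        refine Finset.sum_congr rfl fun i hi => ?_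
        simp [hMdef, Finset.ne_of_mem_erase hi]
      rw [h1, Finset.sum_const, Finset.card_erase_of_mem (Finset.mem_univ j),
        Finset.card_univ, Fintype.card_fin, nsmul_eq_mul]
      have hcast : ((m - 1 : ℕ) : ℝ) = (m:ℝ) - 1 := by
        rw [Nat.cast_sub (by omega), Nat.cast_one]
      rw [hcast]
      simp only [hMdef, if_pos rfl]
      field_simp
      ring
    rw [Finset.sum_congr rfl (fun j _ => hcolM j), hQ1]
  have hsumJ : ∑ i, ∑ j, J i j = 1 := by
    rw [Finset.sum_congr rfl (fun i _ => hrow i), hP1]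
  have hterm2 : ∀ i j, J i j * (Real.log (Q j) - Real.log (M i j))
      = if i = j then R i * (-Real.log (1 - ε))
        else J i j * (Real.log ((m:ℝ) - 1) - Real.log ε) := by
    intro i j
    by_cases h : i = j
    · subst h
      rw [if_pos rfl, hdiag i]
      rcases eq_or_lt_of_le (hR0 i) with h0 | h0
      · rw [← h0]; ring
      · have hQi : 0 < Q i := lt_of_lt_of_le h0 (hRQ i)
        have h1ε : 0 < 1 - ε := by
          have : R i ≤ 1 - ε := by
            rw [← hsumR]
            exact Finset.single_le_sum (fun k _ => hR0 k) (Finset.mem_univ i)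
          linarith
        simp only [hMdef, if_pos rfl]
        rw [Real.log_mul hQi.ne' h1ε.ne']
        ring
    · simp only [if_neg h]
      rcases eq_or_lt_of_le (hJ0 i j) with h0 | h0
      · rw [← h0]; ring
      · have hQj : 0 < Q j := lt_of_lt_of_le h0 (hJQ i j)
        congr 1
        simp only [hMdef, if_neg h]
        rw [Real.log_mul hQj.ne' (div_pos hεpos hm1pos).ne',
          Real.log_div hεpos.ne' hm1pos.ne']
        ring
  have hrow' : ∀ i, ∑ j ∈ univ.erase i, J i j = P i - R i := by
    intro i
    have h := Finset.add_sum_erase univ (J i) (Finset.mem_univ i)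
    rw [hrow i, hdiag i] at h
    linarith
  have hsum2 : ∑ i, ∑ j, (if i = j then R i * (-Real.log (1 - ε))
        else J i j * (Real.log ((m:ℝ) - 1) - Real.log ε))
      = (1 - ε) * (-Real.log (1 - ε)) + ε * (Real.log ((m:ℝ) - 1) - Real.log ε) := by
    have hper : ∀ i, ∑ j, (if i = j then R i * (-Real.log (1 - ε))
          else J i j * (Real.log ((m:ℝ) - 1) - Real.log ε))
        = R i * (-Real.log (1 - ε)) + (P i - R i) * (Real.log ((m:ℝ) - 1) - Real.log ε) := by
      intro i
      rw [← Finset.add_sum_erase _ _ (Finset.mem_univ i), if_pos rfl]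
      congr 1
      have h1 : ∑ j ∈ univ.erase i, (if i = j then R i * (-Real.log (1 - ε))
            else J i j * (Real.log ((m:ℝ) - 1) - Real.log ε))
          = ∑ j ∈ univ.erase i, J i j * (Real.log ((m:ℝ) - 1) - Real.log ε) := by
        refine Finset.sum_congr rfl fun j hj => ?_
        rw [if_neg (Finset.ne_of_mem_erase hj).symm]
      rw [h1, ← Finset.sum_mul, hrow' i]
    rw [Finset.sum_congr rfl (fun i _ => hper i), Finset.sum_add_distrib,
      ← Finset.sum_mul, ← Finset.sum_mul, hsumR, Finset.sum_sub_distrib, hP1, hsumR]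
    ring
  -- Step A : assemble
  have hA : (∑ i, ∑ j, J i j * Real.log (Q j)) - (∑ i, ∑ j, J i j * Real.log (J i j))
      ≤ binEntropy ε + ε * Real.log ((m:ℝ) - 1) := by
    have h1 : ∑ i, ∑ j, (J i j * (Real.log (Q j) - Real.log (J i j)))
        ≤ ∑ i, ∑ j, ((M i j - J i j) + J i j * (Real.log (Q j) - Real.log (M i j))) :=
      Finset.sum_le_sum fun i _ => Finset.sum_le_sum fun j _ => hterm i j
    have h2 : ∑ i, ∑ j, (J i j * (Real.log (Q j) - Real.log (J i j)))
        = (∑ i, ∑ j, J i j * Real.log (Q j)) - (∑ i, ∑ j, J i j * Real.log (J i j)) := by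
      rw [← Finset.sum_sub_distrib]
      refine Finset.sum_congr rfl fun i _ => ?_
      rw [← Finset.sum_sub_distrib]
      refine Finset.sum_congr rfl fun j _ => ?_
      ring
    have h3 : ∑ i, ∑ j, ((M i j - J i j) + J i j * (Real.log (Q j) - Real.log (M i j)))
        = (1 - ε) * (-Real.log (1 - ε)) + ε * (Real.log ((m:ℝ) - 1) - Real.log ε) := by
      have e1 : ∀ i, ∑ j, ((M i j - J i j) + J i j * (Real.log (Q j) - Real.log (M i j)))
          = (∑ j, (M i j - J i j)) + ∑ j, J i j * (Real.log (Q j) - Real.log (M i j)) :=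
        fun i => Finset.sum_add_distrib
      rw [Finset.sum_congr rfl (fun i _ => e1 i), Finset.sum_add_distrib]
      have e2 : ∑ i, ∑ j, (M i j - J i j) = 0 := by
        have e2' : ∀ i : Fin m, ∑ j, (M i j - J i j) = (∑ j, M i j) - ∑ j, J i j :=
          fun i => Finset.sum_sub_distrib _ _
        rw [Finset.sum_congr rfl (fun i _ => e2' i), Finset.sum_sub_distrib, hsumM,
          hsumJ, sub_self]
      rw [e2, zero_add,
        Finset.sum_congr rfl (fun i (_ : i ∈ univ) =>
          Finset.sum_congr rfl (fun j (_ : j ∈ univ) => hterm2 i j)), hsum2]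
    rw [h2] at h1
    rw [h3] at h1
    have : (1 - ε) * (-Real.log (1 - ε)) + ε * (Real.log ((m:ℝ) - 1) - Real.log ε)
        = binEntropy ε + ε * Real.log ((m:ℝ) - 1) := by
      unfold binEntropy; ring
    linarith [h1, this.le]
  unfold shannonEntropy
  rw [hQrw]
  linarith [hB, hA]

/-- entropy continuity bound (Fannes–Audenaert type): for probability
vectors `P, Q` on `m ≥ 2` symbols with total variation distance `ε ≤ 1 − 1/m`,
`|H(P) − H(Q)| ≤ h_b(ε) + ε log(m−1)`, and in particular
`|H(P) − H(Q)| ≤ h_b(ε) + ε log m`. -/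
theorem entropy_continuity (m : ℕ) (hm : 2 ≤ m) (P Q : Fin m → ℝ)
    (hP0 : ∀ i, 0 ≤ P i) (hP1 : ∑ i, P i = 1)
    (hQ0 : ∀ i, 0 ≤ Q i) (hQ1 : ∑ i, Q i = 1)
    (ε : ℝ) (hε : ε = (1 / 2) * ∑ i, |P i - Q i|)
    (hεle : ε ≤ 1 - 1 / (m : ℝ)) :
    |shannonEntropy P - shannonEntropy Q| ≤ binEntropy ε + ε * Real.log ((m : ℝ) - 1) ∧
    |shannonEntropy P - shannonEntropy Q| ≤ binEntropy ε + ε * Real.log (m : ℝ) := by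
  have hεnn : 0 ≤ ε := by
    rw [hε]
    exact mul_nonneg (by norm_num) (Finset.sum_nonneg fun i _ => abs_nonneg _)
  have hm2 : (2:ℝ) ≤ (m:ℝ) := by exact_mod_cast hm
  have key1 : |shannonEntropy P - shannonEntropy Q|
      ≤ binEntropy ε + ε * Real.log ((m : ℝ) - 1) := by
    rcases eq_or_lt_of_le hεnn with h0 | h0
    · -- ε = 0 : P = Q
      have hsum0 : ∑ i, |P i - Q i| = 0 := by
        have : (1/2 : ℝ) * ∑ i, |P i - Q i| = 0 := by rw [← hε, ← h0]
        linarith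
      have hPQ : P = Q := by
        funext i
        have := (Finset.sum_eq_zero_iff_of_nonneg
          (fun i _ => abs_nonneg (P i - Q i))).mp hsum0 i (Finset.mem_univ i)
        rw [abs_eq_zero, sub_eq_zero] at this
        exact this
      rw [hPQ, sub_self, abs_zero, ← h0]
      simp [binEntropy]
    · have hεQP : ε = (1/2) * ∑ i, |Q i - P i| := by
        rw [hε]
        congr 1
        exact Finset.sum_congr rfl fun i _ => abs_sub_comm _ _
      rw [abs_sub_le_iff]
      exact ⟨entropy_key m hm P Q hP0 hP1 hQ0 hQ1 ε hε h0,
        entropy_key m hm Q P hQ0 hQ1 hP0 hP1 ε hεQP h0⟩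
  refine ⟨key1, key1.trans ?_⟩
  have : Real.log ((m:ℝ) - 1) ≤ Real.log (m:ℝ) :=
    Real.log_le_log (by linarith) (by linarith)
  nlinarith [this, hεnn]
end

section
/- Let X be a finite set with probability vector p, let Y be a finite set with |Y| ≤ L for an integer L ≥ 2, and let W and W̃ be two channels from X to Y such that for every x ∈ X the total variation distance (1/2) Σ_{y∈Y} |W_x(y) − W̃_x(y)| ≤ δ, where δ ≤ 1 − 1/L. Define the mutual information of a channel V from X to Y under input p as I(p, V) = H(P_V) − Σ_{x∈X} p(x) H(V_x), where P_V(y) = Σ_{x∈X} p(x) V_x(y) is the output marginal and H denotes Shannon entropy. Then |I(p, W) − I(p, W̃)| ≤ 2 (h_b(δ) + δ log L). -/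
/-- The mutual information of a channel `V : X → Y → ℝ` under input distribution `p`:
`I(p, V) = H(P_V) − ∑_x p(x) H(V_x)` where `P_V(y) = ∑_x p(x) V_x(y)`. -/
noncomputable def mutualInfo {X Y : Type*} [Fintype X] [Fintype Y]
    (p : X → ℝ) (V : X → Y → ℝ) : ℝ :=
  shannonEntropy (fun y => ∑ x, p x * V x y) - ∑ x, p x * shannonEntropy (V x)

lemma shannon_eq {α : Type*} [Fintype α] (P : α → ℝ) :
    shannonEntropy P = ∑ i, Real.negMulLog (P i) := by
  simp [shannonEntropy, Real.negMulLog, ← Finset.sum_neg_distrib]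

lemma negMulLog_subadd {a b : ℝ} (ha : 0 ≤ a) (hb : 0 ≤ b) :
    Real.negMulLog (a + b) ≤ Real.negMulLog a + Real.negMulLog b := by
  rcases eq_or_lt_of_le ha with h | h
  · simp [← h]
  rcases eq_or_lt_of_le hb with h' | h'
  · simp [← h']
  have h1 : Real.log a ≤ Real.log (a + b) := Real.log_le_log h (by linarith)
  have h2 : Real.log b ≤ Real.log (a + b) := Real.log_le_log h' (by linarith)
  simp only [Real.negMulLog]
  nlinarith

lemma shannon_nonneg {α : Type*} [Fintype α] (P : α → ℝ)
    (h0 : ∀ i, 0 ≤ P i) (h1 : ∑ i, P i = 1) : 0 ≤ shannonEntropy P := by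
  rw [shannon_eq]
  refine Finset.sum_nonneg fun i _ => Real.negMulLog_nonneg (h0 i) ?_
  calc P i ≤ ∑ j, P j := Finset.single_le_sum (fun j _ => h0 j) (Finset.mem_univ i)
  _ = 1 := h1

lemma shannon_le_log {α : Type*} [Fintype α] (L : ℕ) (hL : 1 ≤ L)
    (hY : Fintype.card α ≤ L) (P : α → ℝ)
    (h0 : ∀ i, 0 ≤ P i) (h1 : ∑ i, P i = 1) :
    shannonEntropy P ≤ Real.log L := by
  have hL0 : (0:ℝ) < L := by exact_mod_cast hL
  have key : ∀ i, Real.negMulLog (P i) ≤ P i * Real.log L + (1/L - P i) := by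
    intro i
    rcases eq_or_lt_of_le (h0 i) with h | h
    · rw [← h]
      simp only [Real.negMulLog, neg_zero, zero_mul, mul_zero, zero_add, sub_zero, neg_mul]
      positivity
    · have hlog : Real.log (1 / ((P i) * L)) ≤ 1 / ((P i) * L) - 1 :=
        Real.log_le_sub_one_of_pos (by positivity)
      have : Real.log (1 / (P i * L)) = -Real.log (P i) - Real.log L := by
        rw [Real.log_div one_ne_zero (by positivity), Real.log_mul (ne_of_gt h) (ne_of_gt hL0),
          Real.log_one]
        ring
      rw [this] at hlog
      have h2 : 1 / (P i * L) * (P i) = 1 / L := by field_simp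
      simp only [Real.negMulLog]
      nlinarith [hlog, h]
  calc shannonEntropy P = ∑ i, Real.negMulLog (P i) := shannon_eq P
  _ ≤ ∑ i, (P i * Real.log L + (1/L - P i)) := Finset.sum_le_sum fun i _ => key i
  _ = Real.log L + (Fintype.card α / L - 1) := by
      rw [Finset.sum_add_distrib, ← Finset.sum_mul, h1, Finset.sum_sub_distrib, h1]
      simp [Finset.card_univ]
      ring
  _ ≤ Real.log L := by
      have : (Fintype.card α : ℝ) ≤ L := by exact_mod_cast hY
      have : (Fintype.card α : ℝ) / L ≤ 1 := by
        rw [div_le_one hL0]; exact this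
      linarith

lemma _root_.binEntropy_eq (δ : ℝ) :
    _root_.binEntropy δ = Real.negMulLog δ + Real.negMulLog (1 - δ) := by
  simp [_root_.binEntropy, Real.negMulLog]; ring

lemma entropy_sub_le {α : Type*} [Fintype α] (L : ℕ) (hL : 2 ≤ L) (hY : Fintype.card α ≤ L)
    (P Q : α → ℝ) (hP0 : ∀ y, 0 ≤ P y) (hP1 : ∑ y, P y = 1)
    (hQ0 : ∀ y, 0 ≤ Q y) (hQ1 : ∑ y, Q y = 1)
    (δ : ℝ) (hδ0 : 0 < δ) (hδ1 : δ < 1)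
    (hTV : ∑ y, |P y - Q y| ≤ 2 * δ) :
    shannonEntropy P - shannonEntropy Q ≤ _root_.binEntropy δ + δ * Real.log L := by
  have hL1 : 1 ≤ L := by omega
  set m : α → ℝ := fun y => min (P y) (Q y) with hm
  set s : ℝ := ∑ y, m y with hs
  have habs : ∀ y, |P y - Q y| = P y + Q y - 2 * m y := by
    intro y
    rcases le_total (P y) (Q y) with h | h
    · have h2 : m y = P y := min_eq_left h
      rw [abs_of_nonpos (by linarith), h2]; ring
    · have h2 : m y = Q y := min_eq_right h
      rw [abs_of_nonneg (by linarith), h2]; ring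
  have hsum : ∑ y, |P y - Q y| = 2 - 2 * s := by
    rw [hs]
    calc ∑ y, |P y - Q y| = ∑ y, (P y + Q y - 2 * m y) := Finset.sum_congr rfl fun y _ => habs y
    _ = (∑ y, P y) + (∑ y, Q y) - 2 * ∑ y, m y := by
        rw [Finset.sum_sub_distrib, Finset.sum_add_distrib, Finset.mul_sum]
    _ = 2 - 2 * ∑ y, m y := by rw [hP1, hQ1]; ring
  have hs1 : 1 - δ ≤ s := by rw [hsum] at hTV; linarith
  have hs0 : 0 < s := by linarith
  set c : ℝ := (1 - δ) / s with hc
  have hc0 : 0 ≤ c := div_nonneg (by linarith) hs0.le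
  have hc1 : c ≤ 1 := by rw [hc, div_le_one hs0]; exact hs1
  have hcs : c * s = 1 - δ := by rw [hc]; field_simp
  set M : α → ℝ := fun y => m y / s with hM
  set P' : α → ℝ := fun y => (P y - c * m y) / δ with hP'
  set Q' : α → ℝ := fun y => (Q y - c * m y) / δ with hQ'
  have hm0 : ∀ y, 0 ≤ m y := fun y => le_min (hP0 y) (hQ0 y)
  have hM0 : ∀ y, 0 ≤ M y := fun y => div_nonneg (hm0 y) hs0.le
  have hM1 : ∑ y, M y = 1 := by rw [hM]; rw [← Finset.sum_div]; rw [← hs]; field_simp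
  have hcm : ∀ y, c * m y ≤ m y := fun y => by nlinarith [hm0 y]
  have hP'0 : ∀ y, 0 ≤ P' y := fun y => by
    have h1 := min_le_left (P y) (Q y)
    have h2 := hcm y
    exact div_nonneg (by simp only [hm] at h1 h2 ⊢; linarith) hδ0.le
  have hQ'0 : ∀ y, 0 ≤ Q' y := fun y => by
    have h1 := min_le_right (P y) (Q y)
    have h2 := hcm y
    exact div_nonneg (by simp only [hm] at h1 h2 ⊢; linarith) hδ0.le
  have hP'1 : ∑ y, P' y = 1 := by
    rw [hP']
    simp only [← Finset.sum_div, Finset.sum_sub_distrib, ← Finset.mul_sum, ← hs, hP1, hcs]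
    field_simp
    ring
  have hQ'1 : ∑ y, Q' y = 1 := by
    rw [hQ']
    simp only [← Finset.sum_div, Finset.sum_sub_distrib, ← Finset.mul_sum, ← hs, hQ1, hcs]
    field_simp
    ring
  have hdecP : ∀ y, P y = (1 - δ) * M y + δ * P' y := by
    intro y; rw [hM, hP', hc]; field_simp; ring
  have hdecQ : ∀ y, Q y = (1 - δ) * M y + δ * Q' y := by
    intro y; rw [hM, hQ', hc]; field_simp; ring
  -- upper bound for H(P)
  have hup : shannonEntropy P ≤
      (1 - δ) * shannonEntropy M + δ * shannonEntropy P' + _root_.binEntropy δ := by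
    have key : ∀ y, Real.negMulLog (P y) ≤
        (1 - δ) * Real.negMulLog (M y) + δ * Real.negMulLog (P' y)
          + M y * Real.negMulLog (1 - δ) + P' y * Real.negMulLog δ := by
      intro y
      rw [hdecP y]
      calc Real.negMulLog ((1 - δ) * M y + δ * P' y)
          ≤ Real.negMulLog ((1 - δ) * M y) + Real.negMulLog (δ * P' y) :=
            negMulLog_subadd (mul_nonneg (by linarith) (hM0 y)) (mul_nonneg hδ0.le (hP'0 y))
        _ = (1 - δ) * Real.negMulLog (M y) + δ * Real.negMulLog (P' y)
            + M y * Real.negMulLog (1 - δ) + P' y * Real.negMulLog δ := by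
            rw [Real.negMulLog_mul, Real.negMulLog_mul]; ring
    calc shannonEntropy P = ∑ y, Real.negMulLog (P y) := shannon_eq P
      _ ≤ ∑ y, ((1 - δ) * Real.negMulLog (M y) + δ * Real.negMulLog (P' y)
          + M y * Real.negMulLog (1 - δ) + P' y * Real.negMulLog δ) :=
          Finset.sum_le_sum fun y _ => key y
      _ = (1 - δ) * shannonEntropy M + δ * shannonEntropy P' + _root_.binEntropy δ := by
          simp only [Finset.sum_add_distrib, ← Finset.mul_sum, ← Finset.sum_mul,
            hM1, hP'1, shannon_eq, _root_.binEntropy_eq]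
          ring
  -- lower bound for H(Q)
  have hlow : (1 - δ) * shannonEntropy M + δ * shannonEntropy Q' ≤ shannonEntropy Q := by
    have key : ∀ y, (1 - δ) * Real.negMulLog (M y) + δ * Real.negMulLog (Q' y)
        ≤ Real.negMulLog (Q y) := by
      intro y
      rw [hdecQ y]
      have := Real.concaveOn_negMulLog.2 (Set.mem_Ici.2 (hM0 y)) (Set.mem_Ici.2 (hQ'0 y))
        (by linarith : (0:ℝ) ≤ 1 - δ) (le_of_lt hδ0) (by ring : (1 - δ) + δ = 1)
      simpa using this
    calc (1 - δ) * shannonEntropy M + δ * shannonEntropy Q'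
        = ∑ y, ((1 - δ) * Real.negMulLog (M y) + δ * Real.negMulLog (Q' y)) := by
          simp only [shannon_eq, Finset.sum_add_distrib, ← Finset.mul_sum]
      _ ≤ ∑ y, Real.negMulLog (Q y) := Finset.sum_le_sum fun y _ => key y
      _ = shannonEntropy Q := (shannon_eq Q).symm
  have h1 : shannonEntropy P' ≤ Real.log L := shannon_le_log L hL1 hY P' hP'0 hP'1
  have h2 : 0 ≤ shannonEntropy Q' := shannon_nonneg Q' hQ'0 hQ'1
  nlinarith [hup, hlow, h1, h2, hδ0.le]

lemma entropy_abs_le {α : Type*} [Fintype α] (L : ℕ) (hL : 2 ≤ L) (hY : Fintype.card α ≤ L)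
    (P Q : α → ℝ) (hP0 : ∀ y, 0 ≤ P y) (hP1 : ∑ y, P y = 1)
    (hQ0 : ∀ y, 0 ≤ Q y) (hQ1 : ∑ y, Q y = 1)
    (δ : ℝ) (hδ0 : 0 < δ) (hδ1 : δ < 1)
    (hTV : ∑ y, |P y - Q y| ≤ 2 * δ) :
    |shannonEntropy P - shannonEntropy Q| ≤ _root_.binEntropy δ + δ * Real.log L := by
  rw [abs_sub_le_iff]
  constructor
  · exact entropy_sub_le L hL hY P Q hP0 hP1 hQ0 hQ1 δ hδ0 hδ1 hTV
  · refine entropy_sub_le L hL hY Q P hQ0 hQ1 hP0 hP1 δ hδ0 hδ1 ?_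
    simpa [abs_sub_comm] using hTV

theorem mutualInfo_continuity' (X Y : Type*) [Fintype X] [Fintype Y]
    (L : ℕ) (hL : 2 ≤ L) (hY : Fintype.card Y ≤ L)
    (p : X → ℝ) (hp0 : ∀ x, 0 ≤ p x) (hp1 : ∑ x, p x = 1)
    (W Wt : X → Y → ℝ)
    (hW0 : ∀ x y, 0 ≤ W x y) (hW1 : ∀ x, ∑ y, W x y = 1)
    (hWt0 : ∀ x y, 0 ≤ Wt x y) (hWt1 : ∀ x, ∑ y, Wt x y = 1)
    (δ : ℝ) (hδ : ∀ x, (1 / 2) * ∑ y, |W x y - Wt x y| ≤ δ)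
    (hδle : δ ≤ 1 - 1 / (L : ℝ)) :
    |mutualInfo p W - mutualInfo p Wt| ≤
      2 * (_root_.binEntropy δ + δ * Real.log (L : ℝ)) := by
  have hL0 : (0:ℝ) < L := by positivity
  have hδ1 : δ < 1 := by
    have : 0 < 1 / (L:ℝ) := by positivity
    linarith
  -- X is nonempty
  have hX : Nonempty X := by
    rcases isEmpty_or_nonempty X with h | h
    · exfalso; rw [Finset.univ_eq_empty, Finset.sum_empty] at hp1; norm_num at hp1
    · exact h
  obtain ⟨x0⟩ := hX
  have hδ0 : 0 ≤ δ := by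
    have h1 := hδ x0
    have h2 : 0 ≤ ∑ y, |W x0 y - Wt x0 y| := Finset.sum_nonneg fun y _ => abs_nonneg _
    linarith
  rcases eq_or_lt_of_le hδ0 with hδz | hδpos
  · -- δ = 0 : channels equal
    have heq : W = Wt := by
      funext x y
      have h1 := hδ x
      have h2 : ∀ y' ∈ Finset.univ, (0:ℝ) ≤ |W x y' - Wt x y'| := fun y' _ => abs_nonneg _
      have h3 : ∑ y, |W x y - Wt x y| = 0 := le_antisymm (by linarith [hδ x]) (Finset.sum_nonneg h2)
      have h4 := (Finset.sum_eq_zero_iff_of_nonneg h2).1 h3 y (Finset.mem_univ y)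
      have := abs_eq_zero.1 h4
      linarith
    rw [heq, sub_self, abs_zero, ← hδz]
    have : _root_.binEntropy 0 = 0 := by simp [_root_.binEntropy]
    rw [this]; norm_num
  · -- δ > 0
    set g : ℝ := _root_.binEntropy δ + δ * Real.log L with hg
    -- output marginal bound
    have hmarg0 : ∀ (V : X → Y → ℝ), (∀ x y, 0 ≤ V x y) → ∀ y, 0 ≤ ∑ x, p x * V x y :=
      fun V hV y => Finset.sum_nonneg fun x _ => mul_nonneg (hp0 x) (hV x y)
    have hmarg1 : ∀ (V : X → Y → ℝ), (∀ x, ∑ y, V x y = 1) → ∑ y, ∑ x, p x * V x y = 1 := by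
      intro V hV
      rw [Finset.sum_comm]
      calc ∑ x, ∑ y, p x * V x y = ∑ x, p x * ∑ y, V x y := by
            simp [Finset.mul_sum]
        _ = 1 := by simp only [hV, mul_one, hp1]
    have hTVm : ∑ y, |(∑ x, p x * W x y) - ∑ x, p x * Wt x y| ≤ 2 * δ := by
      calc ∑ y, |(∑ x, p x * W x y) - ∑ x, p x * Wt x y|
          = ∑ y, |∑ x, p x * (W x y - Wt x y)| := by
            refine Finset.sum_congr rfl fun y _ => ?_
            rw [← Finset.sum_sub_distrib]
            congr 1
            exact Finset.sum_congr rfl fun x _ => by ring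
        _ ≤ ∑ y, ∑ x, |p x * (W x y - Wt x y)| :=
            Finset.sum_le_sum fun y _ => Finset.abs_sum_le_sum_abs _ _
        _ = ∑ x, p x * ∑ y, |W x y - Wt x y| := by
            rw [Finset.sum_comm]
            congr 1; funext x
            rw [Finset.mul_sum]
            congr 1; funext y
            rw [abs_mul, abs_of_nonneg (hp0 x)]
        _ ≤ ∑ x, p x * (2 * δ) := by
            refine Finset.sum_le_sum fun x _ => mul_le_mul_of_nonneg_left ?_ (hp0 x)
            linarith [hδ x]
        _ = 2 * δ := by rw [← Finset.sum_mul, hp1, one_mul]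
    have habs1 : |shannonEntropy (fun y => ∑ x, p x * W x y)
        - shannonEntropy (fun y => ∑ x, p x * Wt x y)| ≤ g :=
      entropy_abs_le L hL hY _ _ (hmarg0 W hW0) (hmarg1 W hW1)
        (hmarg0 Wt hWt0) (hmarg1 Wt hWt1) δ hδpos hδ1 hTVm
    have habs2 : |(∑ x, p x * shannonEntropy (W x)) - ∑ x, p x * shannonEntropy (Wt x)| ≤ g := by
      have hx : ∀ x, |shannonEntropy (W x) - shannonEntropy (Wt x)| ≤ g := by
        intro x
        exact entropy_abs_le L hL hY _ _ (hW0 x) (hW1 x) (hWt0 x) (hWt1 x) δ hδpos hδ1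
          (by linarith [hδ x])
      calc |(∑ x, p x * shannonEntropy (W x)) - ∑ x, p x * shannonEntropy (Wt x)|
          = |∑ x, p x * (shannonEntropy (W x) - shannonEntropy (Wt x))| := by
            rw [← Finset.sum_sub_distrib]; congr 1; apply Finset.sum_congr rfl; intros; ring
        _ ≤ ∑ x, |p x * (shannonEntropy (W x) - shannonEntropy (Wt x))| :=
            Finset.abs_sum_le_sum_abs _ _
        _ = ∑ x, p x * |shannonEntropy (W x) - shannonEntropy (Wt x)| := by
            apply Finset.sum_congr rfl; intros x _
            rw [abs_mul, abs_of_nonneg (hp0 x)]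
        _ ≤ ∑ x, p x * g :=
            Finset.sum_le_sum fun x _ => mul_le_mul_of_nonneg_left (hx x) (hp0 x)
        _ = g := by rw [← Finset.sum_mul, hp1, one_mul]
    calc |mutualInfo p W - mutualInfo p Wt|
        ≤ |shannonEntropy (fun y => ∑ x, p x * W x y)
            - shannonEntropy (fun y => ∑ x, p x * Wt x y)|
          + |(∑ x, p x * shannonEntropy (W x)) - ∑ x, p x * shannonEntropy (Wt x)| := by
          rw [mutualInfo, mutualInfo]
          set A := shannonEntropy (fun y => ∑ x, p x * W x y)
          set B := ∑ x, p x * shannonEntropy (W x)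
          set C := shannonEntropy (fun y => ∑ x, p x * Wt x y)
          set D := ∑ x, p x * shannonEntropy (Wt x)
          calc |A - B - (C - D)| = |(A - C) + (D - B)| := by ring_nf
            _ ≤ |A - C| + |D - B| := abs_add_le _ _
            _ = |A - C| + |B - D| := by rw [abs_sub_comm D B]
      _ ≤ 2 * g := by linarith

/-- continuity of mutual information under total-variation perturbation
of the channel: if `|Y| ≤ L` with `L ≥ 2` and the channels `W, W̃` satisfy
`TV(W_x, W̃_x) ≤ δ ≤ 1 − 1/L` for every `x`, then
`|I(p, W) − I(p, W̃)| ≤ 2(h_b(δ) + δ log L)`. -/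
theorem mutualInfo_continuity (X Y : Type*) [Fintype X] [Fintype Y]
    (L : ℕ) (hL : 2 ≤ L) (hY : Fintype.card Y ≤ L)
    (p : X → ℝ) (hp0 : ∀ x, 0 ≤ p x) (hp1 : ∑ x, p x = 1)
    (W Wt : X → Y → ℝ)
    (hW0 : ∀ x y, 0 ≤ W x y) (hW1 : ∀ x, ∑ y, W x y = 1)
    (hWt0 : ∀ x y, 0 ≤ Wt x y) (hWt1 : ∀ x, ∑ y, Wt x y = 1)
    (δ : ℝ) (hδ : ∀ x, (1 / 2) * ∑ y, |W x y - Wt x y| ≤ δ)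
    (hδle : δ ≤ 1 - 1 / (L : ℝ)) :
    |mutualInfo p W - mutualInfo p Wt| ≤
      2 * (binEntropy δ + δ * Real.log (L : ℝ)) :=
  mutualInfo_continuity' X Y L hL hY p hp0 hp1 W Wt hW0 hW1 hWt0 hWt1 δ hδ hδle
end
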